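/- Let m ≥ 2 be a natural number, B > 0, P ≥ 1 a natural number, and σ : ℕ → ℝ a function such that σ(p) > 0, |σ(p) − 1| ≤ 1/2, and |σ(p) − 1| ≤ B·p^{−(1+m/2)} for every prime p. Assume (4·B/(m−1))·P^{−m/2} ≤ log 2. Then the infinite product 𝔖 := ∏'_{p prime} σ(p) converges, is positive, and the truncation 𝔖_P := ∏_{p prime, p ≤ P} σ(p) satisfies |𝔖 − 𝔖_P| ≤ 𝔖 · (8·B/(m−1))·P^{−m/2}. -/

import Mathlib

open Real Finset

private lemma aux_abs_log {x : ℝ} (hx : 0 < x) (h : |x - 1| ≤ 1 / 2) :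
    |Real.log x| ≤ 2 * |x - 1| := by
  have h2 : 1 / 2 ≤ x := by
    have := (abs_le.mp h).1; linarith
  rw [abs_le]
  constructor
  · rcases le_or_gt 1 x with h1 | h1
    · have hl : 0 ≤ Real.log x := Real.log_nonneg h1
      have ha : 0 ≤ |x - 1| := abs_nonneg _
      linarith
    · have habs : |x - 1| = 1 - x := by
        rw [abs_of_nonpos (by linarith)]; ring
      have hinv := Real.log_le_sub_one_of_pos (x := x⁻¹) (by positivity)
      rw [Real.log_inv] at hinv
      have hx0 : x ≠ 0 := ne_of_gt hx
      have hinv2 : x⁻¹ - 1 = (1 - x) / x := by field_simp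
      have h3 : (1 - x) / x ≤ 2 * (1 - x) := by
        rw [div_le_iff₀ hx]
        nlinarith
      rw [habs]; linarith
  · have h1 := Real.log_le_sub_one_of_pos hx
    have h2' := le_abs_self (x - 1)
    have h3 : (0 : ℝ) ≤ |x - 1| := abs_nonneg _
    linarith

private lemma aux_key {s : ℝ} (hs : 1 ≤ s) {x : ℝ} (hx : 1 ≤ x) :
    s * (x + 1) ^ (-(1 + s)) ≤ x ^ (-s) - (x + 1) ^ (-s) := by
  have hx0 : (0 : ℝ) < x := by linarith
  have hx1 : (0 : ℝ) < x + 1 := by linarith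
  have hbern : 1 + s * (1 / x) ≤ (1 + 1 / x) ^ s :=
    one_add_mul_self_le_rpow_one_add (by
      have h01 : (0:ℝ) ≤ 1 / x := by positivity
      linarith) hs
  have h1x : (1 : ℝ) + 1 / x = (x + 1) / x := by field_simp
  rw [h1x, Real.div_rpow (by positivity) (le_of_lt hx0)] at hbern
  set A := x ^ s with hA'
  set C := (x + 1) ^ s with hC'
  have hA : 0 < A := Real.rpow_pos_of_pos hx0 s
  have hC : 0 < C := Real.rpow_pos_of_pos hx1 s
  have hxA : x ^ (-s) = A⁻¹ := by rw [Real.rpow_neg (le_of_lt hx0)]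
  have hxC : (x + 1) ^ (-s) = C⁻¹ := by rw [Real.rpow_neg (le_of_lt hx1)]
  have hxD : (x + 1) ^ (-(1 + s)) = (C * (x + 1))⁻¹ := by
    rw [Real.rpow_neg (le_of_lt hx1)]
    congr 1
    rw [show (1 : ℝ) + s = s + 1 by ring, Real.rpow_add_one (ne_of_gt hx1)]
  rw [hxA, hxC, hxD]
  -- from Bernoulli: A * (1 + s/x) ≤ C, i.e. A * x + A * s ≤ C * x
  have h2 : A * (1 + s * (1 / x)) ≤ C := by
    have := mul_le_mul_of_nonneg_left hbern (le_of_lt hA)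
    calc A * (1 + s * (1 / x)) ≤ A * (C / A) := this
      _ = C := by field_simp
  have h2x : A * x + A * s ≤ C * x := by
    have := mul_le_mul_of_nonneg_right h2 (le_of_lt hx0)
    have hx0' : x ≠ 0 := ne_of_gt hx0
    calc A * x + A * s = A * (1 + s * (1 / x)) * x := by field_simp
      _ ≤ C * x := this
  have key : s * (A * C) ≤ (C - A) * (C * (x + 1)) := by
    have hCA : A * s ≤ (C - A) * x := by nlinarith
    have hCA0 : 0 ≤ C - A := by nlinarith
    nlinarith [mul_le_mul_of_nonneg_right hCA (le_of_lt hC), mul_pos hA hC]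
  have h3 : s / (C * (x + 1)) ≤ (C - A) / (A * C) := by
    rw [div_le_div_iff₀ (by positivity) (by positivity)]
    linarith [key]
  calc s * (C * (x + 1))⁻¹ = s / (C * (x + 1)) := by rw [div_eq_mul_inv]
    _ ≤ (C - A) / (A * C) := h3
    _ = A⁻¹ - C⁻¹ := by field_simp

private lemma aux_tail {s : ℝ} (hs : 1 ≤ s) {P : ℕ} (hP : 1 ≤ P) :
    (∑' k : ℕ, ((P + 1 + k : ℕ) : ℝ) ^ (-(1 + s))) ≤ (P : ℝ) ^ (-s) / s := by
  have hs0 : (0 : ℝ) < s := by linarith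
  have hsum : Summable (fun n : ℕ => (n : ℝ) ^ (-(1 + s))) :=
    Real.summable_nat_rpow.mpr (by linarith)
  have hinj : Function.Injective (fun k : ℕ => P + 1 + k) := fun a b h => Nat.add_left_cancel h
  have hsum2 : Summable (fun k : ℕ => ((P + 1 + k : ℕ) : ℝ) ^ (-(1 + s))) :=
    hsum.comp_injective hinj
  refine Summable.tsum_le_of_sum_le hsum2 (fun t => ?_)
  obtain ⟨n, hn⟩ := t.exists_nat_subset_range
  set d : ℕ → ℝ := fun k => ((P + k : ℕ) : ℝ) ^ (-s) with hd
  have hterm : ∀ k : ℕ, ((P + 1 + k : ℕ) : ℝ) ^ (-(1 + s)) ≤ (d k - d (k + 1)) / s := by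
    intro k
    have hx : (1 : ℝ) ≤ ((P + k : ℕ) : ℝ) := by
      have : 1 ≤ P + k := by omega
      exact_mod_cast this
    have := aux_key hs hx
    have hcast1 : ((P + 1 + k : ℕ) : ℝ) = ((P + k : ℕ) : ℝ) + 1 := by push_cast; ring
    have hcast2 : ((P + (k + 1) : ℕ) : ℝ) = ((P + k : ℕ) : ℝ) + 1 := by push_cast; ring
    rw [le_div_iff₀ hs0]
    simp only [hd, hcast1, hcast2]
    linarith
  calc ∑ k ∈ t, ((P + 1 + k : ℕ) : ℝ) ^ (-(1 + s))
      ≤ ∑ k ∈ Finset.range n, ((P + 1 + k : ℕ) : ℝ) ^ (-(1 + s)) := by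
        refine Finset.sum_le_sum_of_subset_of_nonneg hn (fun i _ _ => by positivity)
    _ ≤ ∑ k ∈ Finset.range n, (d k - d (k + 1)) / s :=
        Finset.sum_le_sum (fun k _ => hterm k)
    _ = (∑ k ∈ Finset.range n, (d k - d (k + 1))) / s := by
        rw [Finset.sum_div]
    _ = (d 0 - d n) / s := by rw [Finset.sum_range_sub' d n]
    _ ≤ d 0 / s := by
        have h0 : 0 ≤ d n := by simp only [hd]; positivity
        exact (div_le_div_iff_of_pos_right hs0).mpr (by linarith)
    _ = (P : ℝ) ^ (-s) / s := by simp [hd]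

private lemma aux_exp {T ε : ℝ} (h1 : |T| ≤ ε) (h2 : ε ≤ Real.log 2) :
    |Real.exp T - 1| ≤ Real.exp T * (2 * ε) := by
  have hε0 : 0 ≤ ε := le_trans (abs_nonneg T) h1
  have hT1 : -ε ≤ T := (abs_le.mp h1).1
  have hT2 : T ≤ ε := (abs_le.mp h1).2
  rcases le_or_gt 0 T with hT | hT
  · have he1 : 1 ≤ Real.exp T := Real.one_le_exp hT
    rw [abs_of_nonneg (by linarith)]
    -- exp T - 1 ≤ T * exp T
    have h3 : 1 - T ≤ Real.exp (-T) := by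
      have := Real.add_one_le_exp (-T); linarith
    have h4 : (1 - T) * Real.exp T ≤ Real.exp (-T) * Real.exp T :=
      mul_le_mul_of_nonneg_right h3 (le_of_lt (Real.exp_pos T))
    rw [← Real.exp_add] at h4
    simp only [neg_add_cancel, Real.exp_zero] at h4
    have h5 : Real.exp T - 1 ≤ T * Real.exp T := by nlinarith
    have h6 : T * Real.exp T ≤ ε * Real.exp T :=
      mul_le_mul_of_nonneg_right hT2 (le_of_lt (Real.exp_pos T))
    nlinarith [Real.exp_pos T]
  · have he1 : Real.exp T < 1 := by
      rw [← Real.exp_zero]; exact Real.exp_lt_exp.mpr hT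
    rw [abs_of_nonpos (by linarith)]
    have h3 : 1 - Real.exp T ≤ -T := by
      have := Real.add_one_le_exp T; linarith
    have h4 : Real.exp (-ε) ≤ Real.exp T := Real.exp_le_exp.mpr hT1
    have h5 : Real.exp (-Real.log 2) ≤ Real.exp (-ε) :=
      Real.exp_le_exp.mpr (by linarith)
    have h6 : Real.exp (-Real.log 2) = 1 / 2 := by
      rw [Real.exp_neg, Real.exp_log (by norm_num : (0:ℝ) < 2)]; norm_num
    have h7 : (1 : ℝ) / 2 ≤ Real.exp T := by rw [← h6]; exact le_trans h5 h4
    nlinarith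

theorem truncated_singular_series_error_diag (m : ℕ) (hm : 2 ≤ m) (B : ℝ) (hB : 0 < B)
    (P : ℕ) (hP : 1 ≤ P) (σ : ℕ → ℝ)
    (hpos : ∀ p : ℕ, p.Prime → 0 < σ p)
    (hhalf : ∀ p : ℕ, p.Prime → |σ p - 1| ≤ 1 / 2)
    (hdecay : ∀ p : ℕ, p.Prime → |σ p - 1| ≤ B * (p : ℝ) ^ (-(1 + (m : ℝ) / 2)))
    (hS : (4 * B / ((m : ℝ) - 1)) * (P : ℝ) ^ (-((m : ℝ) / 2)) ≤ Real.log 2) :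
    Multipliable (fun p : {p : ℕ // p.Prime} => σ p.1) ∧
    0 < (∏' p : {p : ℕ // p.Prime}, σ p.1) ∧
    |(∏' p : {p : ℕ // p.Prime}, σ p.1) -
        ∏ p ∈ (Finset.range (P + 1)).filter Nat.Prime, σ p|
      ≤ (∏' p : {p : ℕ // p.Prime}, σ p.1) *
          ((8 * B / ((m : ℝ) - 1)) * (P : ℝ) ^ (-((m : ℝ) / 2))) := by
  have hs1 : (1 : ℝ) ≤ (m : ℝ) / 2 := by
    have : (2 : ℝ) ≤ (m : ℝ) := by exact_mod_cast hm
    linarith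
  have hm1 : (0 : ℝ) < (m : ℝ) - 1 := by
    have : (2 : ℝ) ≤ (m : ℝ) := by exact_mod_cast hm
    linarith
  have hm0 : (0 : ℝ) < (m : ℝ) := by linarith
  set s : ℝ := (m : ℝ) / 2 with hsdef
  set f : {p : ℕ // p.Prime} → ℝ := fun p => Real.log (σ p.1) with hf
  -- pointwise bound on |f|
  have hfabs : ∀ p : {p : ℕ // p.Prime}, |f p| ≤ 2 * B * (p.1 : ℝ) ^ (-(1 + s)) := by
    intro p
    have h1 := aux_abs_log (hpos p.1 p.2) (hhalf p.1 p.2)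
    have h2 := hdecay p.1 p.2
    calc |f p| ≤ 2 * |σ p.1 - 1| := h1
      _ ≤ 2 * (B * (p.1 : ℝ) ^ (-(1 + s))) := by linarith
      _ = 2 * B * (p.1 : ℝ) ^ (-(1 + s)) := by ring
  have hgsum : Summable (fun n : ℕ => (n : ℝ) ^ (-(1 + s))) :=
    Real.summable_nat_rpow.mpr (by rw [hsdef]; linarith)
  have hgsum2 : Summable (fun p : {p : ℕ // p.Prime} => 2 * B * (p.1 : ℝ) ^ (-(1 + s))) := by
    exact ((hgsum.mul_left (2 * B)).subtype (setOf Nat.Prime))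
  have hfabs_sum : Summable (fun p => |f p|) :=
    Summable.of_nonneg_of_le (fun p => abs_nonneg _) hfabs hgsum2
  have hfs : Summable f := hfabs_sum.of_abs
  set L : ℝ := ∑' p, f p with hL
  have hprod : HasProd (fun p : {p : ℕ // p.Prime} => σ p.1) (Real.exp L) := by
    have := hfs.hasSum.rexp
    have heq : (Real.exp ∘ f) = fun p : {p : ℕ // p.Prime} => σ p.1 := by
      funext p
      simp [hf, Real.exp_log (hpos p.1 p.2)]
    rwa [heq] at this
  have hmul : Multipliable (fun p : {p : ℕ // p.Prime} => σ p.1) := hprod.multipliable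
  have htprod : (∏' p : {p : ℕ // p.Prime}, σ p.1) = Real.exp L := hprod.tprod_eq
  refine ⟨hmul, by rw [htprod]; exact Real.exp_pos L, ?_⟩
  -- split the sum
  set sF : Finset {p : ℕ // p.Prime} := (Finset.range (P + 1)).subtype Nat.Prime with hsF
  have hsplit : ∑ p ∈ sF, f p + ∑' (q : ↑(↑sF : Set {p : ℕ // p.Prime})ᶜ), f q = L :=
    Summable.sum_add_tsum_compl hfs
  set T : ℝ := ∑' (q : ↑(↑sF : Set {p : ℕ // p.Prime})ᶜ), f q.1 with hT
  -- the finite product equals exp of the finite sum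
  have hEP : Real.exp (∑ p ∈ sF, f p) = ∏ p ∈ (Finset.range (P + 1)).filter Nat.Prime, σ p := by
    have h1 : ∑ p ∈ sF, f p = ∑ p ∈ (Finset.range (P + 1)).filter Nat.Prime, Real.log (σ p) := by
      rw [hsF]
      exact Finset.sum_subtype_eq_sum_filter (fun p => Real.log (σ p)) (p := Nat.Prime)
    rw [h1, Real.exp_sum]
    refine Finset.prod_congr rfl (fun p hp => ?_)
    exact Real.exp_log (hpos p (Finset.mem_filter.mp hp).2)
  set EP : ℝ := ∏ p ∈ (Finset.range (P + 1)).filter Nat.Prime, σ p with hEPdef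
  have hEPpos : 0 < EP := by
    refine Finset.prod_pos (fun p hp => hpos p (Finset.mem_filter.mp hp).2)
  have hLsplit : Real.exp L = EP * Real.exp T := by
    rw [← hsplit, Real.exp_add, hEP]
  -- bound |T|
  set ε : ℝ := (4 * B / ((m : ℝ) - 1)) * (P : ℝ) ^ (-s) with hε
  have hTbound : |T| ≤ ε := by
    have habs : |T| ≤ ∑' (q : ↑(↑sF : Set {p : ℕ // p.Prime})ᶜ), |f q.1| := by
      have := norm_tsum_le_tsum_norm (f := fun q : ↑(↑sF : Set {p : ℕ // p.Prime})ᶜ => f q.1)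
        (hfabs_sum.subtype _)
      simpa [Real.norm_eq_abs] using this
    have hcompl_ge : ∀ q : ↑(↑sF : Set {p : ℕ // p.Prime})ᶜ, P + 1 ≤ q.1.1 := by
      intro q
      have hq := q.2
      simp only [Set.mem_compl_iff, Finset.mem_coe, hsF, Finset.mem_subtype,
        Finset.mem_range] at hq
      omega
    set G : ℕ → ℝ := fun k => 2 * B * ((P + 1 + k : ℕ) : ℝ) ^ (-(1 + s)) with hG
    have hGsum : Summable G := by
      have hinj : Function.Injective (fun k : ℕ => P + 1 + k) := fun a b h =>
        Nat.add_left_cancel h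
      exact ((hgsum.mul_left (2 * B)).comp_injective hinj)
    have hle2 : (∑' (q : ↑(↑sF : Set {p : ℕ // p.Prime})ᶜ), |f q.1|) ≤ ∑' k, G k := by
      refine Summable.tsum_le_tsum_of_inj (fun q => q.1.1 - (P + 1)) ?_ (fun c _ => by positivity)
        ?_ (hfabs_sum.subtype _) hGsum
      · intro q1 q2 h
        have h1 := hcompl_ge q1
        have h2 := hcompl_ge q2
        have h' : q1.1.1 - (P + 1) = q2.1.1 - (P + 1) := h
        exact Subtype.ext (Subtype.ext (by omega))
      · intro q
        have hq := hcompl_ge q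
        have hcast : P + 1 + (q.1.1 - (P + 1)) = q.1.1 := by omega
        simp only [hG, hcast]
        exact hfabs q.1
    have hle3 : (∑' k, G k) ≤ 2 * B * ((P : ℝ) ^ (-s) / s) := by
      have h1 : (∑' k, G k) = 2 * B * ∑' k, ((P + 1 + k : ℕ) : ℝ) ^ (-(1 + s)) := by
        rw [hG, tsum_mul_left]
      rw [h1]
      have := aux_tail hs1 hP
      have h2B : (0 : ℝ) ≤ 2 * B := by linarith
      exact mul_le_mul_of_nonneg_left this h2B
    have hle4 : 2 * B * ((P : ℝ) ^ (-s) / s) ≤ ε := by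
      rw [hε]
      have hPpow : (0 : ℝ) < (P : ℝ) ^ (-s) := by
        apply Real.rpow_pos_of_pos
        exact_mod_cast Nat.lt_of_lt_of_le Nat.zero_lt_one hP
      have hs0 : (0 : ℝ) < s := by linarith
      have key : 2 * B / s ≤ 4 * B / ((m : ℝ) - 1) := by
        rw [div_le_div_iff₀ hs0 hm1, hsdef]
        nlinarith
      calc 2 * B * ((P : ℝ) ^ (-s) / s) = (2 * B / s) * (P : ℝ) ^ (-s) := by ring
        _ ≤ (4 * B / ((m : ℝ) - 1)) * (P : ℝ) ^ (-s) :=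
            mul_le_mul_of_nonneg_right key (le_of_lt hPpow)
    calc |T| ≤ ∑' (q : ↑(↑sF : Set {p : ℕ // p.Prime})ᶜ), |f q.1| := habs
      _ ≤ ∑' k, G k := hle2
      _ ≤ 2 * B * ((P : ℝ) ^ (-s) / s) := hle3
      _ ≤ ε := hle4
  have hεlog : ε ≤ Real.log 2 := hS
  have hexp := aux_exp hTbound hεlog
  rw [htprod, hLsplit]
  have hrw : |EP * Real.exp T - EP| = EP * |Real.exp T - 1| := by
    have heq : EP * Real.exp T - EP = EP * (Real.exp T - 1) := by ring
    rw [heq, abs_mul, abs_of_pos hEPpos]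
  rw [hrw]
  have h8 : (8 * B / ((m : ℝ) - 1)) * (P : ℝ) ^ (-s) = 2 * ε := by
    rw [hε]; ring
  rw [h8]
  calc EP * |Real.exp T - 1| ≤ EP * (Real.exp T * (2 * ε)) :=
        mul_le_mul_of_nonneg_left hexp (le_of_lt hEPpos)
    _ = EP * Real.exp T * (2 * ε) := by ring
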